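/- Let N be the set of all Zermelo naturals and 𝒫(N) its power set. Then for every natural number n, F(n+2, 𝒫(N)) = 𝒫({ Z(i) | i ≤ n }), the power set of the set of the first n+1 Zermelo naturals. -/
import Mathlib


open ZFSet

/-- The approximation function: `F 0 A = ∅`, `F (n+1) A = {F n x | x ∈ A}`. -/
noncomputable def F : ℕ → ZFSet → ZFSet
  | 0, _ => ∅
  | n + 1, A => @ZFSet.image (F n) (Classical.allZFSetDefinable fun s => F n (s 0)) A

/-- Zermelo numerals: `Z 0 = ∅`, `Z (n+1) = {Z n}`. -/
noncomputable def Z : ℕ → ZFSet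
  | 0 => ∅
  | n + 1 => {Z n}

lemma mem_F_succ {n : ℕ} {A y : ZFSet} :
    y ∈ F (n + 1) A ↔ ∃ z ∈ A, F n z = y := by
  exact @ZFSet.mem_image (F n) (Classical.allZFSetDefinable fun s => F n (s 0)) A y

lemma FZ : ∀ n i, F n (Z i) = Z (min n i) := by
  intro n
  induction n with
  | zero => intro i; simp [F, Z]
  | succ n ih =>
    intro i
    cases i with
    | zero =>
      apply ZFSet.ext; intro y
      rw [mem_F_succ]
      simp [Z]
    | succ i =>
      apply ZFSet.ext; intro y
      rw [mem_F_succ]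
      simp [Z, Nat.succ_min_succ, ih, eq_comm]

theorem stmt_8 (n : ℕ) :
    F (n + 2) (ZFSet.powerset (ZFSet.range Z)) =
      ZFSet.powerset (ZFSet.range (fun i : {i : ℕ // i ≤ n} => Z i)) := by
  apply ZFSet.ext; intro x
  rw [show n + 2 = (n + 1) + 1 from rfl, mem_F_succ, ZFSet.mem_powerset]
  constructor
  · rintro ⟨S, hS, rfl⟩
    rw [ZFSet.mem_powerset] at hS
    intro y hy
    rw [mem_F_succ] at hy
    obtain ⟨z, hz, rfl⟩ := hy
    obtain ⟨i, rfl⟩ := ZFSet.mem_range.1 (hS hz)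
    rw [FZ]
    exact ZFSet.mem_range.2 ⟨⟨min n i, min_le_left _ _⟩, rfl⟩
  · intro hx
    refine ⟨x, ?_, ?_⟩
    · rw [ZFSet.mem_powerset]
      intro y hy
      obtain ⟨⟨i, hi⟩, rfl⟩ := ZFSet.mem_range.1 (hx hy)
      exact ZFSet.mem_range.2 ⟨i, rfl⟩
    · apply ZFSet.ext; intro y
      rw [mem_F_succ]
      constructor
      · rintro ⟨z, hz, rfl⟩
        obtain ⟨⟨i, hi⟩, rfl⟩ := ZFSet.mem_range.1 (hx hz)
        rwa [FZ, min_eq_right hi]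
      · intro hy
        obtain ⟨⟨i, hi⟩, rfl⟩ := ZFSet.mem_range.1 (hx hy)
        exact ⟨Z i, hy, by rw [FZ, min_eq_right hi]⟩
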